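/- arXiv:1311.0377 — 3 statements merged into one kernel-verified Lean document; each statement's English description precedes it below -/
import Mathlib

section
/- Let B be the (m+k)×(m+k) symmetric block matrix [[I, D],[Dᵀ, I]]. For every vector z ∈ ℝ^(m+k), one has B·z = z if and only if C·z = −z; that is, the space of fixed points of B coincides with the space of anti-fixed points of the Coxeter transformation C. -/
open Matrix

/-!
Since `w₁` is an involution, `C z = w₁ (w₂ z) = -z` is equivalent to `w₂ z = -w₁ z`, that is,
to `(w₁ + w₂) z = 0`. The diagonal blocks of `w₁ + w₂` vanish and its off-diagonal blocks are
`-2D` and `-2Dᵀ`, so `w₁ + w₂ = -2 (B - 1)`.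
-/

section Involution

variable {n R : Type*} [Fintype n] [DecidableEq n] [CommRing R]

theorem mul_mulVec_eq_neg_iff_add_mulVec_eq_zero {w v : Matrix n n R} (hw : w * w = 1)
    (z : n → R) : (w * v) *ᵥ z = -z ↔ (w + v) *ᵥ z = 0 := by
  have apply_w_iff (x y : n → R) : w *ᵥ x = y ↔ x = w *ᵥ y :=
    ⟨fun h => by rw [← h, mulVec_mulVec, hw, one_mulVec],
      fun h => by rw [h, mulVec_mulVec, hw, one_mulVec]⟩
  rw [← mulVec_mulVec, apply_w_iff, mulVec_neg, eq_neg_iff_add_eq_zero, add_comm, add_mulVec]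

end Involution

section Blocks

variable {l m R : Type*} [DecidableEq l] [DecidableEq m] [CommRing R]

theorem fromBlocks_neg_one_one_mul_self [Fintype l] [Fintype m] (A : Matrix l m R) :
    fromBlocks (-1 : Matrix l l R) A 0 (1 : Matrix m m R) * fromBlocks (-1) A 0 1 = 1 := by
  simp [fromBlocks_multiply, ← fromBlocks_one]

theorem fromBlocks_add_fromBlocks_eq_smul_sub_one (c : R) (A : Matrix l m R)
    (A' : Matrix m l R) :
    fromBlocks (-1) (c • A) 0 1 + fromBlocks 1 0 (c • A') (-1) =
      c • (fromBlocks 1 A A' 1 - 1) := by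
  rw [← fromBlocks_one, sub_eq_add_neg, fromBlocks_neg, fromBlocks_add, fromBlocks_add,
    fromBlocks_smul]
  simp

end Blocks

theorem mulVec_eq_self_iff_smul_sub_one_mulVec_eq_zero {n K : Type*} [Fintype n] [DecidableEq n]
    [Field K] {c : K} (hc : c ≠ 0) (B : Matrix n n K) (z : n → K) :
    B *ᵥ z = z ↔ (c • (B - 1)) *ᵥ z = 0 := by
  rw [smul_mulVec, smul_eq_zero, sub_mulVec, one_mulVec, sub_eq_zero,
    or_iff_right hc]

theorem stmt_3_general (m k : ℕ)
    (D : Matrix (Fin m) (Fin k) ℝ)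
    (C : Matrix (Fin m ⊕ Fin k) (Fin m ⊕ Fin k) ℝ)
    (hC : C = fromBlocks (-1) ((-2 : ℝ) • D) 0 1 * fromBlocks 1 0 ((-2 : ℝ) • Dᵀ) (-1))
    (B : Matrix (Fin m ⊕ Fin k) (Fin m ⊕ Fin k) ℝ)
    (hB : B = fromBlocks 1 D Dᵀ 1) :
    ∀ z : Fin m ⊕ Fin k → ℝ, B *ᵥ z = z ↔ C *ᵥ z = -z := by
  intro z
  rw [hC, mul_mulVec_eq_neg_iff_add_mulVec_eq_zero (fromBlocks_neg_one_one_mul_self _),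
    fromBlocks_add_fromBlocks_eq_smul_sub_one, ← hB]
  exact mulVec_eq_self_iff_smul_sub_one_mulVec_eq_zero (by norm_num) B z

/-- With `F = Dᵀ` and `B = [[I,D],[Dᵀ,I]]`, the space of fixed points of `B`
coincides with the space of anti-fixed points of the Coxeter transformation `C = w₁·w₂`:
for every `z`, `B·z = z ↔ C·z = −z`. -/
theorem stmt_3 (m k : ℕ) (hm : 0 < m) (hk : 0 < k)
    (D : Matrix (Fin m) (Fin k) ℝ)
    (C : Matrix (Fin m ⊕ Fin k) (Fin m ⊕ Fin k) ℝ)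
    (hC : C = fromBlocks (-1) ((-2 : ℝ) • D) 0 1 * fromBlocks 1 0 ((-2 : ℝ) • Dᵀ) (-1))
    (B : Matrix (Fin m ⊕ Fin k) (Fin m ⊕ Fin k) ℝ)
    (hB : B = fromBlocks 1 D Dᵀ 1) :
    ∀ z : Fin m ⊕ Fin k → ℝ, B *ᵥ z = z ↔ C *ᵥ z = -z :=
  stmt_3_general m k D C hC B hB
end

section
/- Let φ, λ ∈ ℂ with λ ≠ 0, λ ≠ −1 and (λ+1)² = 4λφ, and let x ∈ ℂ^m satisfy (D·F)·x = φ·x. Then the vector z := (x, −(2/(λ+1))·F·x) satisfies C·z = λ·z. In particular, every eigenvalue φ of DF gives rise to the eigenvalues λ = 2φ − 1 ± 2√(φ(φ−1)) of the Coxeter transformation C. -/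
/-!
Write `z = (x, y)` with `y = -(2/(λ+1)) F x`. Using `D F x = φ x`, both blocks of `C z` are scalar
multiples of `x` and of `F x`, so `C z = λ z` reduces to two scalar identities:
`4φ - 1 - 4φ/(λ+1) = λ`, which is `(λ+1)² = 4λφ`, and `-2 + 2/(λ+1) = -2λ/(λ+1)`, which always holds.
-/

open Matrix

theorem Sum.elim_smul_smul {α β γ M : Type*} [SMul M γ] (c : M) (a : α → γ) (b : β → γ) :
    Sum.elim (c • a) (c • b) = c • Sum.elim a b := by
  ext (i | i) <;> rfl

variable {R m n : Type*} [Fintype m] [Fintype n] [DecidableEq m] [DecidableEq n]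

/-- The product `w₁ w₂` of the two block reflections. -/
def coxeter [CommRing R] (D : Matrix m n R) (F : Matrix n m R) : Matrix (m ⊕ n) (m ⊕ n) R :=
  fromBlocks (-1) ((-2 : R) • D) 0 1 * fromBlocks 1 0 ((-2 : R) • F) (-1)

theorem coxeter_mulVec_sumElim [CommRing R] (D : Matrix m n R) (F : Matrix n m R)
    (x : m → R) (y : n → R) :
    coxeter D F *ᵥ (x ⊕ᵥ y)
      = ((4 : R) • D *ᵥ F *ᵥ x - x + (2 : R) • D *ᵥ y) ⊕ᵥ (-(2 : R) • F *ᵥ x - y) := by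
  rw [coxeter, ← mulVec_mulVec, fromBlocks_mulVec, fromBlocks_mulVec]
  simp only [Sum.elim_comp_inl, Sum.elim_comp_inr, one_mulVec, zero_mulVec, add_zero, zero_add,
    smul_mulVec, mulVec_add, mulVec_smul, mulVec_neg, neg_mulVec]
  congr 1 <;> module

theorem coxeter_mulVec_eq_smul [Field R] {D : Matrix m n R} {F : Matrix n m R}
    {phi lam : R} (hlam : lam ≠ -1) (hquad : (lam + 1) ^ 2 = 4 * lam * phi) {x : m → R}
    (hx : (D * F) *ᵥ x = phi • x) :
    coxeter D F *ᵥ (x ⊕ᵥ -(2 / (lam + 1)) • F *ᵥ x) = lam • (x ⊕ᵥ -(2 / (lam + 1)) • F *ᵥ x) := by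
  have hlam' : lam + 1 ≠ 0 := fun h => hlam (eq_neg_of_add_eq_zero_left h)
  have hDF : D *ᵥ F *ᵥ x = phi • x := by rw [mulVec_mulVec, hx]
  have hcoeff_x : 4 * phi - 1 - 4 * phi / (lam + 1) = lam := by
    field_simp
    linear_combination -hquad
  have hcoeff_Fx : -2 + 2 / (lam + 1) = lam * -(2 / (lam + 1)) := by
    field_simp
    ring
  rw [coxeter_mulVec_sumElim, ← Sum.elim_smul_smul, mulVec_smul, hDF]
  congr 1
  · linear_combination (norm := module) hcoeff_x • x
  · linear_combination (norm := module) hcoeff_Fx • F *ᵥ x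

theorem stmt_5_general (m k : ℕ)
    (D : Matrix (Fin m) (Fin k) ℂ) (F : Matrix (Fin k) (Fin m) ℂ)
    (C : Matrix (Fin m ⊕ Fin k) (Fin m ⊕ Fin k) ℂ)
    (hC : C = fromBlocks (-1) ((-2 : ℂ) • D) 0 1 * fromBlocks 1 0 ((-2 : ℂ) • F) (-1))
    (phi lam : ℂ) (hlam1 : lam ≠ -1)
    (hquad : (lam + 1) ^ 2 = 4 * lam * phi)
    (x : Fin m → ℂ) (hx : (D * F) *ᵥ x = phi • x) :
    C *ᵥ Sum.elim x (-(2 / (lam + 1)) • (F *ᵥ x))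
      = lam • Sum.elim x (-(2 / (lam + 1)) • (F *ᵥ x)) := by
  subst hC
  exact coxeter_mulVec_eq_smul hlam1 hquad hx

/-- If `lam ≠ 0`, `lam ≠ −1`, `(lam+1)² = 4·lam·φ` and `(DF)·x = φ·x`, then
`z = (x, −(2/(lam+1))·F·x)` satisfies `C·z = lam·z`; thus every eigenvalue `φ` of `DF`
gives rise to the eigenvalues `lam = 2φ − 1 ± 2√(φ(φ−1))` of the Coxeter transformation. -/
theorem stmt_5 (m k : ℕ) (hm : 0 < m) (hk : 0 < k)
    (D : Matrix (Fin m) (Fin k) ℂ) (F : Matrix (Fin k) (Fin m) ℂ)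
    (C : Matrix (Fin m ⊕ Fin k) (Fin m ⊕ Fin k) ℂ)
    (hC : C = fromBlocks (-1) ((-2 : ℂ) • D) 0 1 * fromBlocks 1 0 ((-2 : ℂ) • F) (-1))
    (phi lam : ℂ) (hlam0 : lam ≠ 0) (hlam1 : lam ≠ -1)
    (hquad : (lam + 1) ^ 2 = 4 * lam * phi)
    (x : Fin m → ℂ) (hx : (D * F) *ᵥ x = phi • x) :
    C *ᵥ Sum.elim x (-(2 / (lam + 1)) • (F *ᵥ x))
      = lam • Sum.elim x (-(2 / (lam + 1)) • (F *ᵥ x)) :=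
  stmt_5_general m k D F C hC phi lam hlam1 hquad x hx
end

section
/- Let x ∈ ℂ^m satisfy (D·F)·x = x. Then the vectors z := (x, −F·x) and z̃ := (1/4)·(x, F·x) satisfy C·z = z and C·z̃ = z + z̃. In particular, if x ≠ 0 then C has a Jordan block of size at least 2 at the eigenvalue 1. -/
/-!
Multiplying out the two reflections gives `C = [[4DF - I, 2D], [-2F, -I]]`. Using `DFx = x`,
the block formula yields `C (x, -Fx) = (x, -Fx)` and `C (x, Fx) = 4 (x, -Fx) + (x, Fx)`, so
`(C - I) z̃ = z` and `(C - I)² z̃ = (C - I) z = 0`, while `z ≠ 0` as soon as `x ≠ 0`.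
-/

open Matrix

theorem Sum.smul_elim {α β γ M : Type*} [SMul M γ] (c : M) (f : α → γ) (g : β → γ) :
    c • Sum.elim f g = Sum.elim (c • f) (c • g) := by
  ext (_ | _) <;> rfl

namespace Matrix

section Coxeter

variable {m n R : Type*} [Fintype m] [Fintype n] [DecidableEq m] [DecidableEq n] [CommRing R]

theorem fromBlocks_reflection_mul_reflection (D : Matrix m n R) (F : Matrix n m R) :
    fromBlocks (-1) ((-2 : R) • D) 0 1 * fromBlocks 1 0 ((-2 : R) • F) (-1) =
      fromBlocks ((4 : R) • (D * F) - 1) ((2 : R) • D) ((-2 : R) • F) (-1) := by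
  rw [fromBlocks_multiply]
  congr 1 <;> simp only [Matrix.smul_mul, Matrix.mul_smul, Matrix.mul_neg, Matrix.one_mul,
    Matrix.mul_one, Matrix.mul_zero] <;> module

variable {D : Matrix m n R} {F : Matrix n m R} {x : m → R}

theorem fromBlocks_coxeter_mulVec_elim_neg (hx : D *ᵥ F *ᵥ x = x) :
    fromBlocks ((4 : R) • (D * F) - 1) ((2 : R) • D) ((-2 : R) • F) (-1) *ᵥ
      Sum.elim x (-(F *ᵥ x)) = Sum.elim x (-(F *ᵥ x)) := by
  rw [fromBlocks_mulVec, Sum.elim_comp_inl, Sum.elim_comp_inr]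
  congr 1
  · simp only [sub_mulVec, smul_mulVec, ← mulVec_mulVec, hx, one_mulVec, mulVec_neg]
    module
  · simp only [smul_mulVec, neg_mulVec, one_mulVec]
    module

theorem fromBlocks_coxeter_mulVec_elim (hx : D *ᵥ F *ᵥ x = x) :
    fromBlocks ((4 : R) • (D * F) - 1) ((2 : R) • D) ((-2 : R) • F) (-1) *ᵥ
      Sum.elim x (F *ᵥ x) = (4 : R) • Sum.elim x (-(F *ᵥ x)) + Sum.elim x (F *ᵥ x) := by
  rw [fromBlocks_mulVec, Sum.elim_comp_inl, Sum.elim_comp_inr, Sum.smul_elim,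
    ← Sum.elim_add_add]
  congr 1
  · simp only [sub_mulVec, smul_mulVec, ← mulVec_mulVec, hx, one_mulVec]
    module
  · simp only [smul_mulVec, neg_mulVec, one_mulVec]
    module

end Coxeter

section GeneralizedEigenvector

variable {ι R : Type*} [Fintype ι] [DecidableEq ι] [Ring R] {C : Matrix ι ι R} {z w : ι → R}

theorem sub_one_mulVec_eq_of_mulVec_eq_add (hw : C *ᵥ w = z + w) : (C - 1) *ᵥ w = z := by
  rw [sub_mulVec, hw, one_mulVec, add_sub_cancel_right]

theorem sub_one_mul_sub_one_mulVec_eq_zero (hz : C *ᵥ z = z) (hw : C *ᵥ w = z + w) :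
    ((C - 1) * (C - 1)) *ᵥ w = 0 := by
  rw [← mulVec_mulVec, sub_one_mulVec_eq_of_mulVec_eq_add hw, sub_mulVec, hz, one_mulVec,
    sub_self]

end GeneralizedEigenvector

end Matrix

theorem stmt_6_general (m k : ℕ)
    (D : Matrix (Fin m) (Fin k) ℂ) (F : Matrix (Fin k) (Fin m) ℂ)
    (C : Matrix (Fin m ⊕ Fin k) (Fin m ⊕ Fin k) ℂ)
    (hC : C = fromBlocks (-1) ((-2 : ℂ) • D) 0 1 * fromBlocks 1 0 ((-2 : ℂ) • F) (-1))
    (x : Fin m → ℂ) (hx : (D * F) *ᵥ x = x)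
    (z ztil : Fin m ⊕ Fin k → ℂ)
    (hz : z = Sum.elim x (-(F *ᵥ x)))
    (hztil : ztil = (1 / 4 : ℂ) • Sum.elim x (F *ᵥ x)) :
    C *ᵥ z = z ∧ C *ᵥ ztil = z + ztil ∧
    (x ≠ 0 → ∃ v : Fin m ⊕ Fin k → ℂ,
      ((C - 1) * (C - 1)) *ᵥ v = 0 ∧ (C - 1) *ᵥ v ≠ 0) := by
  have hDFx : D *ᵥ F *ᵥ x = x := by rwa [mulVec_mulVec]
  rw [fromBlocks_reflection_mul_reflection] at hC
  have hCz : C *ᵥ z = z := by rw [hC, hz, fromBlocks_coxeter_mulVec_elim_neg hDFx]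
  have hCztil : C *ᵥ ztil = z + ztil := by
    rw [hztil, mulVec_smul, hC, fromBlocks_coxeter_mulVec_elim hDFx, smul_add, smul_smul, ← hz]
    norm_num
  refine ⟨hCz, hCztil, fun hx0 => ⟨ztil, sub_one_mul_sub_one_mulVec_eq_zero hCz hCztil, ?_⟩⟩
  rw [sub_one_mulVec_eq_of_mulVec_eq_add hCztil, hz]
  intro h
  exact hx0 (congrArg (· ∘ Sum.inl) h)

/-- If `(DF)·x = x`, then `z = (x, −F·x)` and `z̃ = (1/4)·(x, F·x)` satisfy
`C·z = z` and `C·z̃ = z + z̃`; in particular, if `x ≠ 0` then `C` has a Jordan block of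
size at least 2 at the eigenvalue 1 (there is a vector killed by `(C−I)²` but not by `C−I`). -/
theorem stmt_6 (m k : ℕ) (hm : 0 < m) (hk : 0 < k)
    (D : Matrix (Fin m) (Fin k) ℂ) (F : Matrix (Fin k) (Fin m) ℂ)
    (C : Matrix (Fin m ⊕ Fin k) (Fin m ⊕ Fin k) ℂ)
    (hC : C = fromBlocks (-1) ((-2 : ℂ) • D) 0 1 * fromBlocks 1 0 ((-2 : ℂ) • F) (-1))
    (x : Fin m → ℂ) (hx : (D * F) *ᵥ x = x)
    (z ztil : Fin m ⊕ Fin k → ℂ)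
    (hz : z = Sum.elim x (-(F *ᵥ x)))
    (hztil : ztil = (1 / 4 : ℂ) • Sum.elim x (F *ᵥ x)) :
    C *ᵥ z = z ∧ C *ᵥ ztil = z + ztil ∧
    (x ≠ 0 → ∃ v : Fin m ⊕ Fin k → ℂ,
      ((C - 1) * (C - 1)) *ᵥ v = 0 ∧ (C - 1) *ᵥ v ≠ 0) :=
  stmt_6_general m k D F C hC x hx z ztil hz hztil
end
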